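/- In the polynomial ring ℂ[p₁,p₂,t], for each i = 0, 1, 2, the polynomial t² divides uᵢ(1, 0, −1, −1+p₂·t, p₁·t, 1+t) − t·νᵢ, where ν = (ν₀, ν₁, ν₂) = (−2p₁, p₂ − 1, 2p₁ − p₂ − 1). Moreover, the linear map ℂ³ → ℂ³ sending (p₀, p₁, p₂) to (−2p₁, −p₀ + p₂, −p₀ + 2p₁ − p₂) has nonzero determinant (equal to 4), hence is invertible. (This is the (2,2,2) case for the symbol pattern [x y z; x y z]: the limiting Pascal line depends on the blow-up direction (p₁, p₂) through an invertible linear change of coordinates, so the image of the exceptional ℙ² is all of the dual plane.) -/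

import Mathlib

/-!
At `t = 0` the two rows of the array coincide and every `uᵢ` vanishes; the substituted `uᵢ`
is a polynomial of degree two in `t` whose linear coefficient `ν` is `M · (1, p₁, p₂)`. Since
`det M = 4`, the limiting line `ν` sweeps out the whole dual plane as `(1 : p₁ : p₂)` varies.
-/

open MvPolynomial Matrix

namespace Pascal222Full

noncomputable section

/-- The coordinates `(u₀, u₁, u₂)` of the Pascal line of the array
`[τ a, τ b, τ c; τ f, τ e, τ d]`, over any commutative ring. -/
def u {R : Type*} [CommRing R] (a b c d e f : R) : Fin 3 → R :=
  ![a*b*d*e - a*b*d*f - a*c*d*e + a*c*e*f + b*c*d*f - b*c*e*f,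
    -(a*b*e) + a*b*f + a*c*d - a*c*f + a*d*f - a*e*f - b*c*d + b*c*e - b*d*e + b*e*f + c*d*e - c*d*f,
    -(a*d) + a*e + b*d - b*f - c*e + c*f]

/-- The variables `p₁, p₂, t` of the polynomial ring `ℂ[p₁,p₂,t]`. -/
def p1 : MvPolynomial (Fin 3) ℂ := X 0
def p2 : MvPolynomial (Fin 3) ℂ := X 1
def t : MvPolynomial (Fin 3) ℂ := X 2

/-- The matrix of the linear map `(p₀, p₁, p₂) ↦ (-2p₁, -p₀ + p₂, -p₀ + 2p₁ - p₂)`. -/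
def M : Matrix (Fin 3) (Fin 3) ℂ := !![0, -2, 0; -1, 0, 1; -1, 2, -1]

section BlowUp

variable {R : Type*} [CommRing R] (p q s : R)

/-- The limiting Pascal line `ν` in the blow-up direction `(p₁, p₂) = (p, q)`. -/
def limitLine : Fin 3 → R := ![-(2 * p), q - 1, 2 * p - q - 1]

def secondOrderTerm : Fin 3 → R := ![p * q - p, 2 * q - p - p * q, 0]

theorem u_blowUp_eq :
    u 1 0 (-1) (-1 + q * s) (p * s) (1 + s) = s • limitLine p q + s ^ 2 • secondOrderTerm p q := by
  funext i
  fin_cases i <;>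
    simp only [u, limitLine, secondOrderTerm, Pi.add_apply, Pi.smul_apply, smul_eq_mul,
      Fin.zero_eta, Fin.mk_one, Fin.reduceFinMk, cons_val] <;>
    ring

theorem sq_dvd_u_blowUp_sub_limitLine (i : Fin 3) :
    s ^ 2 ∣ u 1 0 (-1) (-1 + q * s) (p * s) (1 + s) i - s * limitLine p q i :=
  ⟨secondOrderTerm p q i, by simp [u_blowUp_eq]⟩

end BlowUp

theorem mulVec_M (v : Fin 3 → ℂ) :
    M.mulVec v = ![-2 * v 1, -(v 0) + v 2, -(v 0) + 2 * v 1 - v 2] := by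
  funext i
  fin_cases i <;>
    simp only [M, mulVec, vec3_dotProduct, of_apply, Fin.zero_eta, Fin.mk_one, Fin.reduceFinMk,
      cons_val] <;>
    ring

theorem det_M : M.det = 4 := by
  simp only [M, det_fin_three, of_apply, cons_val]
  norm_num

/-- The `(2,2,2)` case, symbol pattern `[x y z; x y z]`: after the substitution
`a = 1`, `b = 0`, `c = -1`, `f = 1 + t`, `e = p₁t`, `d = -1 + p₂t` (blowing up the
polydiagonal `f = a, e = b, d = c`), each `uᵢ` is divisible by `t` and modulo `t²`
the quotient is `ν = (-2p₁, p₂ - 1, 2p₁ - p₂ - 1)`.  Moreover, the linear map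
`(p₀, p₁, p₂) ↦ (-2p₁, -p₀ + p₂, -p₀ + 2p₁ - p₂)` has determinant `4 ≠ 0`, hence is
invertible: the limiting Pascal line depends on the blow-up direction through an
invertible linear change of coordinates, so the image of the exceptional `ℙ²` is all
of the dual plane. -/
theorem pascal_222_full_image :
    (∀ i : Fin 3,
      t ^ 2 ∣ u 1 0 (-1) (-1 + p2 * t) (p1 * t) (1 + t) i
        - t * (![-(2 * p1), p2 - 1, 2 * p1 - p2 - 1] i)) ∧
    (∀ v : Fin 3 → ℂ, M.mulVec v = ![-2 * v 1, -(v 0) + v 2, -(v 0) + 2 * v 1 - v 2]) ∧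
    M.det = 4 ∧ M.det ≠ 0 ∧ IsUnit M := by
  have det_ne_zero : M.det ≠ 0 := by rw [det_M]; norm_num
  exact ⟨sq_dvd_u_blowUp_sub_limitLine p1 p2 t, mulVec_M, det_M, det_ne_zero,
    (isUnit_iff_isUnit_det M).mpr det_ne_zero.isUnit⟩

end

end Pascal222Full
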